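/- arXiv:1502.03070 — 4 statements merged into one kernel-verified Lean document; each statement's English description precedes it below -/
import Mathlib

section
/- Let A be a normed ℝ-algebra (associative, unital) and let P : ℝ → A⟦X⟧ satisfy constantCoeff (P t) = 0 for all t. Suppose L₁, L₂ : ℝ → A⟦X⟧ both satisfy the formal Lax equation with coefficient P, and L₁ 0 = L₂ 0. Then L₁ = L₂. -/
/-!
Coefficientwise, the Lax equation reads `d/dt Lₙ = [P, L]ₙ`. Since `P` has no constant term,
`[P, L]ₙ` only involves the coefficients `Lₘ` with `m < n`. By strong induction on `n`, two
solutions therefore have the same `n`-th coefficient ODE with the same right-hand side and the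
same initial value, so their `n`-th coefficients agree.
-/

/-- A path `L : ℝ → A⟦X⟧` satisfies the formal Lax equation with coefficient
`P : ℝ → A⟦X⟧` if each coefficient function `t ↦ coeff n (L t)` has derivative
`coeff n (P t * L t - L t * P t)` at every `t`. -/
def FormalLaxEq {A : Type*} [NormedRing A] [NormedAlgebra ℝ A]
    (P L : ℝ → PowerSeries A) : Prop :=
  ∀ (n : ℕ) (t : ℝ),
    HasDerivAt (fun s => PowerSeries.coeff n (L s))
      (PowerSeries.coeff n (P t * L t - L t * P t)) t

namespace PowerSeries

variable {R : Type*} [Ring R] {P f g : R⟦X⟧} {n : ℕ}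

-- `X ∣ P` and `X ^ n ∣ f`, and `X` is central, so `X ^ (n + 1)` divides both products.
theorem coeff_commutator_eq_zero_of_constantCoeff_eq_zero (hP : constantCoeff P = 0)
    (hf : ∀ m < n, coeff m f = 0) : coeff n (P * f - f * P) = 0 := by
  obtain ⟨Q, rfl⟩ := X_dvd_iff.mpr hP
  obtain ⟨F, rfl⟩ := X_pow_dvd_iff.mpr hf
  have hleft : X * Q * (X ^ n * F) = X ^ (n + 1) * (Q * F) := by
    rw [pow_succ', mul_assoc, ← mul_assoc Q, (commute_X_pow Q n).eq]; simp only [mul_assoc]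
  have hright : X ^ n * F * (X * Q) = X ^ (n + 1) * (F * Q) := by
    rw [pow_succ, mul_assoc, ← mul_assoc F, (commute_X F).eq]; simp only [mul_assoc]
  rw [hleft, hright, ← mul_sub, coeff_X_pow_mul', if_neg (by omega)]

theorem coeff_commutator_eq_of_coeff_lt_eq (hP : constantCoeff P = 0)
    (hfg : ∀ m < n, coeff m f = coeff m g) :
    coeff n (P * f - f * P) = coeff n (P * g - g * P) := by
  rw [← sub_eq_zero, ← map_sub]
  have hcomm : P * f - f * P - (P * g - g * P) = P * (f - g) - (f - g) * P := by noncomm_ring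
  rw [hcomm]
  exact coeff_commutator_eq_zero_of_constantCoeff_eq_zero hP
    fun m hm => by rw [map_sub, hfg m hm, sub_self]

end PowerSeries

theorem eq_of_hasDerivAt_eq {E : Type*} [NormedAddCommGroup E] [NormedSpace ℝ E]
    {f g f' : ℝ → E} (hf : ∀ t, HasDerivAt f (f' t) t) (hg : ∀ t, HasDerivAt g (f' t) t)
    (h0 : f 0 = g 0) : f = g :=
  eq_of_fderiv_eq (fun t => (hf t).differentiableAt) (fun t => (hg t).differentiableAt)
    (fun t => (hf t).hasFDerivAt.fderiv.trans (hg t).hasFDerivAt.fderiv.symm) 0 h0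

theorem FormalLaxEq.coeff_eq {A : Type*} [NormedRing A] [NormedAlgebra ℝ A]
    {P L₁ L₂ : ℝ → PowerSeries A} (hP : ∀ t, PowerSeries.constantCoeff (P t) = 0)
    (h₁ : FormalLaxEq P L₁) (h₂ : FormalLaxEq P L₂) (h0 : L₁ 0 = L₂ 0) (n : ℕ) :
    (fun t => PowerSeries.coeff n (L₁ t)) = fun t => PowerSeries.coeff n (L₂ t) := by
  induction n using Nat.strong_induction_on with
  | _ n ih =>
    have hrhs : ∀ t, PowerSeries.coeff n (P t * L₂ t - L₂ t * P t)
        = PowerSeries.coeff n (P t * L₁ t - L₁ t * P t) := fun t =>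
      PowerSeries.coeff_commutator_eq_of_coeff_lt_eq (hP t)
        fun m hm => (congrFun (ih m hm) t).symm
    exact eq_of_hasDerivAt_eq (h₁ n) (fun t => hrhs t ▸ h₂ n t) (by rw [h0])

/-- Uniqueness for the formal Lax equation: if `P` has zero constant coefficient,
two solutions with the same initial value agree. -/
theorem stmt_5 (A : Type*) [NormedRing A] [NormedAlgebra ℝ A]
    (P : ℝ → PowerSeries A) (hP : ∀ t, PowerSeries.constantCoeff (P t) = 0)
    (L₁ L₂ : ℝ → PowerSeries A)
    (h₁ : FormalLaxEq P L₁) (h₂ : FormalLaxEq P L₂)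
    (h0 : L₁ 0 = L₂ 0) :
    L₁ = L₂ :=
  funext fun t => PowerSeries.ext fun n => congrFun (h₁.coeff_eq hP h₂ h0 n) t
end

section
/- Let A be a normed ℝ-algebra (associative, unital), let P : ℝ → A⟦X⟧ satisfy constantCoeff (P t) = 0 for all t, and let U : ℝ → A⟦X⟧ be such that constantCoeff (U t) = 1 for all t and for every n ∈ ℕ and t ∈ ℝ the function t ↦ coeff n (U t) has derivative coeff n (P t * U t) at t. Then each U t is a unit of A⟦X⟧, and for every L₀ ∈ A⟦X⟧ the path L t := U t * L₀ * (U t)⁻¹ satisfies the formal Lax equation with coefficient P and has L 0 = U 0 * L₀ * (U 0)⁻¹. -/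
open Finset

namespace PowerSeries

theorem isUnit_of_constantCoeff_eq_one {R : Type*} [Ring R] {u : R⟦X⟧}
    (hu : constantCoeff u = 1) : IsUnit u :=
  isUnit_iff_constantCoeff.mpr (hu ▸ isUnit_one)

theorem coeff_mul_eq_sum_range_add {R : Type*} [Semiring R] (f g : R⟦X⟧) (n : ℕ) :
    coeff n (f * g) = ∑ i ∈ range n, coeff i f * coeff (n - i) g + coeff n f * coeff 0 g := by
  rw [coeff_mul, Nat.sum_antidiagonal_eq_sum_range_succ_mk, sum_range_succ, Nat.sub_self]

theorem coeff_inverse_of_constantCoeff_eq_one {R : Type*} [Ring R] {u : R⟦X⟧}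
    (hu : constantCoeff u = 1) (n : ℕ) :
    coeff n (Ring.inverse u) =
      (if n = 0 then 1 else 0) - ∑ i ∈ range n, coeff i (Ring.inverse u) * coeff (n - i) u := by
  have h := congrArg (coeff n) (Ring.inverse_mul_cancel u (isUnit_of_constantCoeff_eq_one hu))
  rw [coeff_mul_eq_sum_range_add, coeff_zero_eq_constantCoeff_apply, hu, mul_one, coeff_one] at h
  rw [← h, add_sub_cancel_left]

section CoeffDeriv

variable {𝕜 A : Type*} [NontriviallyNormedField 𝕜] [NormedRing A] [NormedAlgebra 𝕜 A]

def HasCoeffDerivAt (f : 𝕜 → A⟦X⟧) (f' : A⟦X⟧) (x : 𝕜) : Prop :=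
  ∀ n, HasDerivAt (fun y => coeff n (f y)) (coeff n f') x

theorem hasCoeffDerivAt_const (c : A⟦X⟧) (x : 𝕜) : HasCoeffDerivAt (fun _ => c) 0 x :=
  fun n => by simpa only [map_zero] using hasDerivAt_const x (coeff n c)

theorem HasCoeffDerivAt.mul {f g : 𝕜 → A⟦X⟧} {f' g' : A⟦X⟧} {x : 𝕜}
    (hf : HasCoeffDerivAt f f' x) (hg : HasCoeffDerivAt g g' x) :
    HasCoeffDerivAt (fun y => f y * g y) (f' * g x + f x * g') x := by
  intro n
  simp only [coeff_mul, map_add, ← sum_add_distrib]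
  exact HasDerivAt.fun_sum fun p _ => (hf p.1).mul (hg p.2)

theorem HasCoeffDerivAt.coeff_zero_eq_zero {f : 𝕜 → A⟦X⟧} {f' : A⟦X⟧} {x : 𝕜}
    (hf : HasCoeffDerivAt f f' x) (hc : ∀ y, constantCoeff (f y) = 1) : coeff 0 f' = 0 :=
  (hf 0).unique <| by simpa only [coeff_zero_eq_constantCoeff_apply, hc] using hasDerivAt_const x 1

theorem HasCoeffDerivAt.inverse {u : 𝕜 → A⟦X⟧} {u' : A⟦X⟧} {x : 𝕜}
    (hu : HasCoeffDerivAt u u' x) (hc : ∀ y, constantCoeff (u y) = 1) :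
    HasCoeffDerivAt (fun y => Ring.inverse (u y))
      (-(Ring.inverse (u x) * u' * Ring.inverse (u x))) x := by
  set v := Ring.inverse (u x)
  set w := -(v * u' * v)
  have hvu : v * u x = 1 := Ring.inverse_mul_cancel _ (isUnit_of_constantCoeff_eq_one (hc x))
  -- `w` is forced by differentiating `v * u = 1`: `w * u + v * u' = 0`.
  have hw (n : ℕ) : coeff n w =
      -∑ i ∈ range n, (coeff i w * coeff (n - i) (u x) + coeff i v * coeff (n - i) u') := by
    have h : coeff n (w * u x + v * u') = 0 := by
      rw [show w * u x + v * u' = 0 by simp only [w, neg_mul, mul_assoc, hvu]; noncomm_ring,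
        map_zero]
    rw [map_add, coeff_mul_eq_sum_range_add, coeff_mul_eq_sum_range_add,
      coeff_zero_eq_constantCoeff_apply, hc x, hu.coeff_zero_eq_zero hc, mul_one, mul_zero,
      add_zero] at h
    rw [sum_add_distrib, eq_neg_iff_add_eq_zero, ← h]
    abel
  intro n
  induction n using Nat.strong_induction_on with
  | _ n ih =>
    simp only [coeff_inverse_of_constantCoeff_eq_one (hc _) n]
    rw [hw n]
    exact (HasDerivAt.fun_sum fun i hi => (ih i (mem_range.mp hi)).mul (hu (n - i))).const_sub _

end CoeffDeriv

end PowerSeries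

open PowerSeries

theorem stmt_7_general (A : Type*) [NormedRing A] [NormedAlgebra ℝ A]
    (P : ℝ → PowerSeries A)
    (U : ℝ → PowerSeries A)
    (hU1 : ∀ t, PowerSeries.constantCoeff (U t) = 1)
    (hU : ∀ (n : ℕ) (t : ℝ),
      HasDerivAt (fun s => PowerSeries.coeff n (U s))
        (PowerSeries.coeff n (P t * U t)) t) :
    (∀ t, IsUnit (U t)) ∧
    (∀ L₀ : PowerSeries A,
      FormalLaxEq P (fun t => U t * L₀ * Ring.inverse (U t)) ∧
      (fun t => U t * L₀ * Ring.inverse (U t)) 0 = U 0 * L₀ * Ring.inverse (U 0)) := by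
  have hunit (t : ℝ) : IsUnit (U t) := isUnit_of_constantCoeff_eq_one (hU1 t)
  refine ⟨hunit, fun L₀ => ⟨fun n t => ?_, rfl⟩⟩
  have hUt : HasCoeffDerivAt U (P t * U t) t := (hU · t)
  have hL := (hUt.mul (hasCoeffDerivAt_const L₀ t)).mul (hUt.inverse hU1) n
  have hUV : U t * Ring.inverse (U t) = 1 := Ring.mul_inverse_cancel _ (hunit t)
  convert hL using 2
  simp only [mul_zero, add_zero, mul_neg, mul_assoc, hUV, mul_one, ← sub_eq_add_neg]

/-- If `U` solves `∂ₜU = P U` coefficientwise, with `constantCoeff (U t) = 1` and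
`constantCoeff (P t) = 0`, then each `U t` is a unit of `A⟦X⟧` and conjugation
`t ↦ U t * L₀ * (U t)⁻¹` of any `L₀` solves the formal Lax equation with coefficient `P`. -/
theorem stmt_7 (A : Type*) [NormedRing A] [NormedAlgebra ℝ A]
    (P : ℝ → PowerSeries A) (hP0 : ∀ t, PowerSeries.constantCoeff (P t) = 0)
    (U : ℝ → PowerSeries A)
    (hU1 : ∀ t, PowerSeries.constantCoeff (U t) = 1)
    (hU : ∀ (n : ℕ) (t : ℝ),
      HasDerivAt (fun s => PowerSeries.coeff n (U s))
        (PowerSeries.coeff n (P t * U t)) t) :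
    (∀ t, IsUnit (U t)) ∧
    (∀ L₀ : PowerSeries A,
      FormalLaxEq P (fun t => U t * L₀ * Ring.inverse (U t)) ∧
      (fun t => U t * L₀ * Ring.inverse (U t)) 0 = U 0 * L₀ * Ring.inverse (U 0)) :=
  stmt_7_general A P U hU1 hU
end

section
/- Let A be a complete normed ℝ-algebra (associative, unital), P : ℝ → A, and let g : ℝ → Aˣ be such that for every t, HasDerivAt (fun s => ↑(g s)) (P t * ↑(g t)) t. Let S₀ : A →L[ℝ] A be any continuous linear operator, and define S : ℝ → (A →L[ℝ] A) by (S t) x = ↑(g t) * S₀(↑((g t)⁻¹) * x * ↑(g t)) * ↑((g t)⁻¹). Then for every x ∈ A and every t, HasDerivAt (fun s => (S s) x) ((ad (P t)) ((S t) x) − (S t) ((ad (P t)) x)) t; that is, S solves the symmetry equation ∂_t S = [ad P, S]. -/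
/-!
If `g' = P g`, conjugation by `g` differentiates to `ad P`:
`(g y g⁻¹)' = [P, g y g⁻¹] + g y' g⁻¹`. The inverse solves `(g⁻¹)' = -(g⁻¹ P g) g⁻¹`, and
conjugation is an algebra automorphism, so it intertwines `ad`; hence `(g⁻¹ x g)' = -g⁻¹ [P, x] g`.
Differentiating `S x = g S₀(g⁻¹ x g) g⁻¹` with these two rules gives `[P, S x] - S [P, x]`.
-/

/-- The adjoint action `ad Q : x ↦ Q * x - x * Q` as a continuous linear map. -/
noncomputable def adOp {A : Type*} [NormedRing A] [NormedAlgebra ℝ A] (Q : A) :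
    A →L[ℝ] A :=
  ContinuousLinearMap.mul ℝ A Q - (ContinuousLinearMap.mul ℝ A).flip Q

/-- Conjugation by a unit, `x ↦ g * x * g⁻¹`, as a continuous linear map. -/
noncomputable def conjOp {A : Type*} [NormedRing A] [NormedAlgebra ℝ A] (g : Aˣ) :
    A →L[ℝ] A :=
  (ContinuousLinearMap.mul ℝ A (g : A)).comp
    ((ContinuousLinearMap.mul ℝ A).flip ((g⁻¹ : Aˣ) : A))

theorem HasDerivAt.units_inv {𝕜 A : Type*} [NontriviallyNormedField 𝕜] [NormedRing A]
    [NormedAlgebra 𝕜 A] [CompleteSpace A] {g : 𝕜 → Aˣ} {g' : A} {t : 𝕜}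
    (hg : HasDerivAt (fun s => (g s : A)) g' t) :
    HasDerivAt (fun s => ((g s)⁻¹ : Aˣ) : 𝕜 → A)
      (-(((g t)⁻¹ : Aˣ) * g' * ((g t)⁻¹ : Aˣ))) t := by
  simpa [Function.comp_def] using
    (hasFDerivAt_ringInverse (𝕜 := 𝕜) (g t)).comp_hasDerivAt t hg

section Algebra

variable {A : Type*} [NormedRing A] [NormedAlgebra ℝ A]

@[simp]
theorem adOp_apply (Q x : A) : adOp Q x = Q * x - x * Q := rfl

@[simp]
theorem conjOp_apply (g : Aˣ) (x : A) : conjOp g x = g * x * ↑g⁻¹ := by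
  simp [conjOp, mul_assoc]

theorem conjOp_adOp (g : Aˣ) (Q x : A) :
    conjOp g (adOp Q x) = adOp (conjOp g Q) (conjOp g x) := by
  simp only [conjOp_apply, adOp_apply, mul_sub, sub_mul, mul_assoc, Units.inv_mul_cancel_left]

end Algebra

section Calculus

variable {A : Type*} [NormedRing A] [NormedAlgebra ℝ A] [CompleteSpace A]

theorem hasDerivAt_conjOp {g : ℝ → Aˣ} {y : ℝ → A} {P y' : A} {t : ℝ}
    (hg : HasDerivAt (fun s => (g s : A)) (P * g t) t) (hy : HasDerivAt y y' t) :
    HasDerivAt (fun s => conjOp (g s) (y s))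
      (adOp P (conjOp (g t) (y t)) + conjOp (g t) y') t := by
  simp only [conjOp_apply]
  refine ((hg.mul hy).mul hg.units_inv).congr_deriv ?_
  simp only [adOp_apply, Pi.mul_apply, mul_assoc, Units.mul_inv, mul_one]
  noncomm_ring

theorem hasDerivAt_conjOp_inv {g : ℝ → Aˣ} {P : A} {t : ℝ}
    (hg : HasDerivAt (fun s => (g s : A)) (P * g t) t) (x : A) :
    HasDerivAt (fun s => conjOp (g s)⁻¹ x) (-conjOp (g t)⁻¹ (adOp P x)) t := by
  have hinv : HasDerivAt (fun s => ((g s)⁻¹ : Aˣ) : ℝ → A)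
      (-conjOp (g t)⁻¹ P * ((g t)⁻¹ : Aˣ)) t :=
    hg.units_inv.congr_deriv (by simp [mul_assoc])
  refine (hasDerivAt_conjOp hinv (hasDerivAt_const t x)).congr_deriv ?_
  rw [map_zero, add_zero, conjOp_adOp]
  simp only [adOp_apply]
  noncomm_ring

end Calculus

/-- If `g : ℝ → Aˣ` solves `g' = P * g` and `S₀` is any continuous linear operator,
then `S t : x ↦ g t * S₀((g t)⁻¹ * x * g t) * (g t)⁻¹` solves the symmetry equation
`∂ₜ S = [ad P, S]` pointwise: for every `x` and `t`, `s ↦ (S s) x` has derivative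
`(ad (P t)) ((S t) x) - (S t) ((ad (P t)) x)` at `t`. -/
theorem stmt_15 (A : Type*) [NormedRing A] [NormedAlgebra ℝ A] [CompleteSpace A]
    (P : ℝ → A) (g : ℝ → Aˣ)
    (hg : ∀ t : ℝ, HasDerivAt (fun s => ((g s : A))) (P t * (g t : A)) t)
    (S₀ : A →L[ℝ] A) :
    (∀ (t : ℝ) (x : A),
      ((conjOp (g t)).comp (S₀.comp (conjOp ((g t)⁻¹)))) x =
        (g t : A) * S₀ (((g t)⁻¹ : Aˣ) * x * (g t : A)) * ((g t)⁻¹ : Aˣ)) ∧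
    (∀ (x : A) (t : ℝ),
      HasDerivAt (fun s => ((conjOp (g s)).comp (S₀.comp (conjOp ((g s)⁻¹)))) x)
        ((adOp (P t)) (((conjOp (g t)).comp (S₀.comp (conjOp ((g t)⁻¹)))) x) -
          ((conjOp (g t)).comp (S₀.comp (conjOp ((g t)⁻¹)))) ((adOp (P t)) x)) t) := by
  refine ⟨fun t x => by simp, fun x t => ?_⟩
  have hinner := S₀.hasFDerivAt.comp_hasDerivAt t (hasDerivAt_conjOp_inv (hg t) x)
  refine (hasDerivAt_conjOp (hg t) hinner).congr_deriv ?_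
  simp only [ContinuousLinearMap.comp_apply, Function.comp_apply, map_neg, sub_eq_add_neg]
end

section
/- Let A be a complete normed ℝ-algebra (associative, unital) and P : ℝ → A continuous. Define a : ℕ → ℝ → A by a 0 t = 1 and a (n+1) t = ∫_0^t P s * a n s ds, and set U t := ∑'_{n} a n t (the sum of the summable family). Then U 0 = 1 and for every t ≥ 0, U has derivative P t * U t at t within [0, ∞) (HasDerivWithinAt U (P t * U t) (Set.Ici 0) t); that is, the time-ordered exponential series solves ∂_t U = P U, U(0) = 1. -/
/-!
Each `a (n+1)` is a primitive of `P * a n`, so differentiating the series termwise gives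
`P * U`. Termwise differentiation is justified locally: if `‖P‖ ≤ C` on `[-T, T]`, induction
gives `‖a n t‖ ≤ ‖1‖ (C |t|)ⁿ / n!` there, an exponential-series majorant.
-/

/-- The time-ordered iterated integrals of a path `P` in a Banach algebra:
`a 0 t = 1` and `a (n+1) t = ∫ s in 0..t, P s * a n s`. -/
noncomputable def timeOrderedIter {A : Type*} [NormedRing A] [NormedAlgebra ℝ A]
    (P : ℝ → A) : ℕ → ℝ → A
  | 0, _ => 1
  | n + 1, t => ∫ s in (0 : ℝ)..t, P s * timeOrderedIter P n s

open Nat Set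

theorem intervalIntegral.norm_integral_zero_le_mul_abs_pow {E : Type*} [NormedAddCommGroup E]
    [NormedSpace ℝ E] {f : ℝ → E} {K t : ℝ} (n : ℕ)
    (hf : ∀ s ∈ uIcc 0 t, ‖f s‖ ≤ K * |s| ^ n) :
    ‖∫ s in (0 : ℝ)..t, f s‖ ≤ K * |t| ^ (n + 1) / (n + 1) := by
  wlog ht : 0 ≤ t generalizing f t
  · have hneg := this (f := fun s => f (-s)) (t := -t)
      (fun s hs => by
        have hs' := (image_neg_uIcc (a := (0 : ℝ)) (b := -t)).subset (mem_image_of_mem _ hs)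
        simpa using hf (-s) (by simpa using hs'))
      (by linarith)
    simpa [intervalIntegral.integral_comp_neg, intervalIntegral.integral_symm 0 t] using hneg
  calc ‖∫ s in (0 : ℝ)..t, f s‖ ≤ ∫ s in (0 : ℝ)..t, K * s ^ n :=
        intervalIntegral.norm_integral_le_of_norm_le ht
          (Filter.Eventually.of_forall fun s hs => by
            simpa [abs_of_pos hs.1] using hf s (uIcc_of_le ht ▸ Ioc_subset_Icc_self hs))
          ((by fun_prop : Continuous fun s => K * s ^ n).intervalIntegrable 0 t)
    _ = K * |t| ^ (n + 1) / (n + 1) := by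
        rw [intervalIntegral.integral_const_mul, integral_pow, abs_of_nonneg ht]
        ring

namespace timeOrderedIter

variable {A : Type*} [NormedRing A] [NormedAlgebra ℝ A] {P : ℝ → A}

theorem continuous (hP : Continuous P) (n : ℕ) : Continuous (timeOrderedIter P n) := by
  induction n with
  | zero => exact continuous_const
  | succ n ih =>
    exact intervalIntegral.continuous_primitive (fun a b => (hP.mul ih).intervalIntegrable a b) 0

theorem hasDerivAt_succ [CompleteSpace A] (hP : Continuous P) (n : ℕ) (t : ℝ) :
    HasDerivAt (timeOrderedIter P (n + 1)) (P t * timeOrderedIter P n t) t :=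
  ((hP.mul (continuous hP n)).integral_hasStrictDerivAt 0 t).hasDerivAt

theorem norm_le_pow_div_factorial {t C : ℝ} (hC : ∀ s ∈ uIcc 0 t, ‖P s‖ ≤ C) (n : ℕ) :
    ∀ s ∈ uIcc 0 t, ‖timeOrderedIter P n s‖ ≤ ‖(1 : A)‖ * (C * |s|) ^ n / n ! := by
  induction n with
  | zero => intro s _; simp [timeOrderedIter]
  | succ n ih =>
    intro s hs
    have hsub : uIcc 0 s ⊆ uIcc 0 t := uIcc_subset_uIcc left_mem_uIcc hs
    have hint := intervalIntegral.norm_integral_zero_le_mul_abs_pow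
      (f := fun r => P r * timeOrderedIter P n r) (K := ‖(1 : A)‖ * C ^ (n + 1) / n !) n
      fun r hr => calc
        ‖P r * timeOrderedIter P n r‖ ≤ ‖P r‖ * ‖timeOrderedIter P n r‖ :=
            norm_mul_le _ _
        _ ≤ C * (‖(1 : A)‖ * (C * |r|) ^ n / n !) :=
            mul_le_mul (hC r (hsub hr)) (ih r (hsub hr)) (norm_nonneg _)
              ((norm_nonneg _).trans (hC r (hsub hr)))
        _ = ‖(1 : A)‖ * C ^ (n + 1) / n ! * |r| ^ n := by ring
    refine hint.trans_eq ?_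
    rw [factorial_succ]
    push_cast
    field_simp
    ring

theorem tsum_zero : ∑' n, timeOrderedIter P n 0 = 1 :=
  (tsum_eq_single 0 fun n hn => by
    obtain ⟨m, rfl⟩ := exists_eq_succ_of_ne_zero hn
    exact intervalIntegral.integral_same).trans rfl

theorem hasDerivAt_tsum [CompleteSpace A] (hP : Continuous P) (t : ℝ) :
    HasDerivAt (fun u => ∑' n, timeOrderedIter P n u)
      (P t * ∑' n, timeOrderedIter P n t) t := by
  set T := |t| + 1
  have ht : t ∈ Ioo (-T) T := abs_lt.1 (lt_add_one _)
  obtain ⟨C, hC⟩ :=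
    isCompact_Icc.exists_bound_of_continuousOn (hP.continuousOn (s := Icc (-T) T))
  have hC0 : 0 ≤ C := (norm_nonneg _).trans (hC t (Ioo_subset_Icc_self ht))
  have hbound : ∀ n, ∀ y ∈ Ioo (-T) T,
      ‖timeOrderedIter P n y‖ ≤ ‖(1 : A)‖ * (C * T) ^ n / n ! := by
    intro n y hy
    have hsub : uIcc 0 y ⊆ Icc (-T) T :=
      uIcc_subset_Icc ⟨by linarith [abs_nonneg t], by positivity⟩ (Ioo_subset_Icc_self hy)
    refine (norm_le_pow_div_factorial (fun s hs => hC s (hsub hs)) n y right_mem_uIcc).trans ?_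
    gcongr
    exact (abs_lt.2 hy).le
  have hmajorant : Summable fun n : ℕ => ‖(1 : A)‖ * (C * T) ^ n / n ! := by
    simpa only [mul_div_assoc] using
      (Real.summable_pow_div_factorial (C * T)).mul_left ‖(1 : A)‖
  have hsum : ∀ y ∈ Ioo (-T) T, Summable (timeOrderedIter P · y) :=
    fun y hy => .of_norm_bounded hmajorant (hbound · y hy)
  have htail : HasDerivAt (fun y => ∑' n, timeOrderedIter P (n + 1) y)
      (∑' n, P t * timeOrderedIter P n t) t :=
    hasDerivAt_tsum_of_isPreconnected (hmajorant.mul_left C) isOpen_Ioo isPreconnected_Ioo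
      (fun n y _ => hasDerivAt_succ hP n y)
      (fun n y hy => (norm_mul_le _ _).trans
        (mul_le_mul (hC y (Ioo_subset_Icc_self hy)) (hbound n y hy) (norm_nonneg _) hC0))
      ht ((summable_nat_add_iff 1).2 (hsum t ht)) ht
  rw [← (hsum t ht).tsum_mul_left]
  refine (htail.const_add 1).congr_of_eventuallyEq ?_
  filter_upwards [isOpen_Ioo.mem_nhds ht] with y hy
  exact (hsum y hy).tsum_eq_zero_add

end timeOrderedIter

/-- For continuous `P`, the time-ordered exponential `U t = ∑' n, a n t` satisfies
`U 0 = 1` and solves `∂ₜ U = P U` on `[0, ∞)`: for every `t ≥ 0`, `U` has derivative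
`P t * U t` at `t` within `Set.Ici 0`. -/
theorem stmt_17 (A : Type*) [NormedRing A] [NormedAlgebra ℝ A] [CompleteSpace A]
    (P : ℝ → A) (hP : Continuous P) :
    (∑' n : ℕ, timeOrderedIter P n 0) = 1 ∧
    ∀ t : ℝ, 0 ≤ t →
      HasDerivWithinAt (fun u : ℝ => ∑' n : ℕ, timeOrderedIter P n u)
        (P t * ∑' n : ℕ, timeOrderedIter P n t) (Set.Ici (0 : ℝ)) t :=
  ⟨timeOrderedIter.tsum_zero, fun t _ =>
    (timeOrderedIter.hasDerivAt_tsum hP t).hasDerivWithinAt⟩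
end
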